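/- arXiv:2505.08296 — 3 statements merged into one kernel-verified Lean document; each statement's English description precedes it below -/
import Mathlib

section
/- For every integer n ≥ 1, the polynomial a_2(n) := (t0-1)(t1-1)·(2n - (t0 t1 + 1)·a_1(n))/(t0 t1 - 1) - a_1(n), where a_1(n) = Σ_{k=0}^{n-1}(t0 t1)^k, is a nonzero element of Z[t0, t1] whose span equals 2. -/
/-! The quotient is `Q = -S` with `S = ∑_{j<n} (2n - 1 - 2j) (t0 t1)^j`. Grade `ℤ[t0, t1]` by
giving `t0^i t1^j` the weight `i - j`, so that the span is the spread of the weights of the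
monomials. Then `S` and `a₁(n)` have weight `0`, hence
`a₂(n) = (t0 + t1) S - ((t0 t1 + 1) S + a₁(n))` only has monomials of weight `-1`, `0`, `1`,
and its coefficients of `t0` and `t1` both equal the constant term `2n - 1` of `S`. -/

noncomputable section

open MvPolynomial Finset

/-- The polynomial ring `ℤ[t0, t1]`. -/
abbrev R2 : Type := MvPolynomial (Fin 2) ℤ

def t0 : R2 := X 0
def t1 : R2 := X 1

/-- The span of a nonzero two-variable polynomial `P = Σ a_{ij} t0^i t1^j`:
`max {i - j : a_{ij} ≠ 0} - min {i - j : a_{ij} ≠ 0}` (and `0` for `P = 0`). -/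
def span (P : R2) : ℤ :=
  if h : P.support.Nonempty then
    P.support.sup' h (fun p => (p 0 : ℤ) - (p 1 : ℤ))
      - P.support.inf' h (fun p => (p 0 : ℤ) - (p 1 : ℤ))
  else 0

/-- The geometric sum `a₁(n) = Σ_{k=0}^{n-1} (t0 t1)^k`. -/
def a1 (n : ℕ) : R2 := ∑ k ∈ range n, (t0 * t1) ^ k

lemma sub_one_mul_sum_odd_mul_pow {R : Type*} [CommRing R] (x : R) (n : ℕ) :
    (x - 1) * ∑ j ∈ range n, ((2 * ((n : ℤ) - j) - 1 : ℤ) : R) * x ^ j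
      = (x + 1) * ∑ j ∈ range n, x ^ j - 2 * n := by
  induction n with
  | zero => simp
  | succ n ih =>
    have hshift : ∑ j ∈ range n, ((2 * (((n + 1 : ℕ) : ℤ) - j) - 1 : ℤ) : R) * x ^ j
        = ∑ j ∈ range n, ((2 * ((n : ℤ) - j) - 1 : ℤ) : R) * x ^ j
          + 2 * ∑ j ∈ range n, x ^ j := by
      rw [mul_sum, ← sum_add_distrib]
      refine sum_congr rfl fun j _ => ?_
      push_cast; ring
    rw [sum_range_succ, hshift, sum_range_succ]
    push_cast at ih ⊢
    linear_combination ih + 2 * mul_geom_sum x n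

lemma coeff_single_sum_X_mul {σ R : Type*} [CommSemiring R] [Fintype σ] [DecidableEq σ] (i : σ)
    (p : MvPolynomial σ R) : coeff (Finsupp.single i 1) ((∑ k, X k) * p) = coeff 0 p := by
  simp [sum_mul, coeff_sum, coeff_X_mul']

def skewWeight : Fin 2 → ℤ := ![1, -1]

lemma weight_skewWeight (d : Fin 2 →₀ ℕ) :
    Finsupp.weight skewWeight d = (d 0 : ℤ) - d 1 := by
  simp [Finsupp.weight_apply, Finsupp.sum_fintype, skewWeight, sub_eq_add_neg]

lemma isWeightedHomogeneous_t0_mul_t1 : IsWeightedHomogeneous skewWeight (t0 * t1) 0 := by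
  simpa [t0, t1, skewWeight] using
    (isWeightedHomogeneous_X ℤ skewWeight 0).mul (isWeightedHomogeneous_X ℤ skewWeight 1)

lemma isWeightedHomogeneous_t0_mul_t1_pow (j : ℕ) :
    IsWeightedHomogeneous skewWeight ((t0 * t1) ^ j) 0 := by
  simpa using isWeightedHomogeneous_t0_mul_t1.pow j

lemma isWeightedHomogeneous_sum_intCast_mul_t0_mul_t1_pow (c : ℕ → ℤ) (s : Finset ℕ) :
    IsWeightedHomogeneous skewWeight (∑ j ∈ s, (c j : R2) * (t0 * t1) ^ j) 0 :=
  IsWeightedHomogeneous.sum _ _ _ fun j _ => by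
    rw [← eq_intCast C]
    exact (isWeightedHomogeneous_t0_mul_t1_pow j).C_mul _

lemma isWeightedHomogeneous_a1 (n : ℕ) : IsWeightedHomogeneous skewWeight (a1 n) 0 := by
  simpa [a1] using isWeightedHomogeneous_sum_intCast_mul_t0_mul_t1_pow 1 (range n)

lemma coeff_single_t0_add_t1_mul_sub {S T : R2} (hT : IsWeightedHomogeneous skewWeight T 0)
    (i : Fin 2) :
    coeff (Finsupp.single i 1) ((t0 + t1) * S - T) = coeff 0 S := by
  have hweight : Finsupp.weight skewWeight (Finsupp.single i 1) ≠ 0 := by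
    fin_cases i <;> simp [weight_skewWeight]
  rw [coeff_sub, hT.coeff_eq_zero _ hweight, sub_zero, t0, t1, ← Fin.sum_univ_two X,
    coeff_single_sum_X_mul]

lemma abs_sub_le_one_of_mem_support {S T : R2} (hS : IsWeightedHomogeneous skewWeight S 0)
    (hT : IsWeightedHomogeneous skewWeight T 0) {d : Fin 2 →₀ ℕ}
    (hd : d ∈ ((t0 + t1) * S - T).support) : |(d 0 : ℤ) - d 1| ≤ 1 := by
  have h0 : IsWeightedHomogeneous skewWeight (t0 * S) 1 := by
    simpa [t0, skewWeight] using (isWeightedHomogeneous_X ℤ skewWeight 0).mul hS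
  have h1 : IsWeightedHomogeneous skewWeight (t1 * S) (-1) := by
    simpa [t1, skewWeight] using (isWeightedHomogeneous_X ℤ skewWeight 1).mul hS
  rw [mem_support_iff, add_mul, coeff_sub, coeff_add] at hd
  rw [abs_le, ← weight_skewWeight]
  by_cases hd0 : coeff d (t0 * S) = 0
  · by_cases hd1 : coeff d (t1 * S) = 0
    · rw [hT (by simpa [hd0, hd1] using hd)]; norm_num
    · rw [h1 hd1]; norm_num
  · rw [h0 hd0]; norm_num

lemma span_eq_of_forall_mem_support {P : R2} {a b : ℤ}
    (hP : ∀ d ∈ P.support, a ≤ (d 0 : ℤ) - d 1 ∧ (d 0 : ℤ) - d 1 ≤ b)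
    {da db : Fin 2 →₀ ℕ} (hda : da ∈ P.support) (ha : (da 0 : ℤ) - da 1 = a)
    (hdb : db ∈ P.support) (hb : (db 0 : ℤ) - db 1 = b) : span P = b - a := by
  have hne : P.support.Nonempty := ⟨da, hda⟩
  rw [span, dif_pos hne]
  set f : (Fin 2 →₀ ℕ) → ℤ := fun p => (p 0 : ℤ) - p 1
  congr 1
  · exact le_antisymm (sup'_le _ _ fun d hd => (hP d hd).2) (hb ▸ le_sup' f hdb)
  · exact le_antisymm (ha ▸ inf'_le f hda) (le_inf' _ _ fun d hd => (hP d hd).1)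

def oddCoeffSum (n : ℕ) : R2 :=
  ∑ j ∈ range n, ((2 * ((n : ℤ) - j) - 1 : ℤ) : R2) * (t0 * t1) ^ j

lemma coeff_zero_oddCoeffSum {n : ℕ} (hn : 1 ≤ n) : coeff 0 (oddCoeffSum n) = 2 * n - 1 := by
  obtain ⟨m, rfl⟩ := Nat.exists_eq_add_of_le' hn
  simp [oddCoeffSum, ← constantCoeff_eq, sum_range_succ', t0, t1, map_ofNat]

/-- For `n ≥ 1`, with `Q` the (unique) quotient of `2n - (t0·t1 + 1)·a₁(n)` by
`t0·t1 - 1`, the polynomial `a₂(n) = (t0-1)(t1-1)·Q - a₁(n)` is nonzero of span `2`. -/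
theorem a2_span (n : ℕ) (hn : 1 ≤ n) :
    ∃ Q : R2, (t0 * t1 - 1) * Q = (2 * n : ℤ) • (1 : R2) - (t0 * t1 + 1) * a1 n ∧
      (t0 - 1) * (t1 - 1) * Q - a1 n ≠ 0 ∧
      span ((t0 - 1) * (t1 - 1) * Q - a1 n) = 2 := by
  refine ⟨-oddCoeffSum n, ?_, ?_⟩
  · rw [mul_neg, oddCoeffSum, sub_one_mul_sum_odd_mul_pow, a1, zsmul_one]
    push_cast; ring
  set S := oddCoeffSum n
  set T := (t0 * t1 + 1) * S + a1 n
  have hS : IsWeightedHomogeneous skewWeight S 0 :=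
    isWeightedHomogeneous_sum_intCast_mul_t0_mul_t1_pow _ _
  have hT : IsWeightedHomogeneous skewWeight T 0 := by
    simpa using ((isWeightedHomogeneous_t0_mul_t1.add (isWeightedHomogeneous_one ℤ _)).mul hS).add
      (isWeightedHomogeneous_a1 n)
  have ha2 : (t0 - 1) * (t1 - 1) * -S - a1 n = (t0 + t1) * S - T := by ring
  have hcoeff (i : Fin 2) : coeff (Finsupp.single i 1) ((t0 + t1) * S - T) ≠ 0 := by
    rw [coeff_single_t0_add_t1_mul_sub hT, coeff_zero_oddCoeffSum hn]
    omega
  rw [ha2]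
  refine ⟨ne_zero_iff.mpr ⟨_, hcoeff 0⟩, ?_⟩
  have hspan := span_eq_of_forall_mem_support
    (fun d hd => abs_le.mp (abs_sub_le_one_of_mem_support hS hT hd))
    (mem_support_iff.mpr (hcoeff 1)) (by simp) (mem_support_iff.mpr (hcoeff 0)) (by simp)
  simpa using hspan
end
end

section
/- For every natural number n, the polynomial N_x(n) := (-1)^n (t0 - t1) + t0^n (t1 + 1) - t1^n (t0 + 1) is divisible by (t0 + 1)(t1 + 1)(t0 - t1) in Z[t0, t1]. -/
noncomputable section

open MvPolynomial Finset

theorem pow_sub_neg_one_pow_eq_add_one_mul {R : Type*} [CommRing R] (x : R) (n : ℕ) :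
    x ^ n - (-1) ^ n = (x + 1) * ∑ i ∈ range n, x ^ i * (-1) ^ (n - 1 - i) := by
  rw [← geom_sum₂_mul, sub_neg_eq_add, mul_comm]

theorem sub_dvd_sum_pow_mul_sub_sum_pow_mul {R : Type*} [CommRing R] (a b : R) (c : ℕ → R)
    (n : ℕ) : a - b ∣ ∑ i ∈ range n, a ^ i * c i - ∑ i ∈ range n, b ^ i * c i := by
  rw [← sum_sub_distrib]
  refine dvd_sum fun i _ => ?_
  rw [← sub_mul]
  exact dvd_mul_of_dvd_left (sub_dvd_pow_sub_pow a b i) _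

/-- With `G x = (x ^ n - (-1) ^ n) / (x + 1)`, the numerator is `(a + 1) (b + 1) (G a - G b)`. -/
theorem add_one_mul_add_one_mul_sub_dvd {R : Type*} [CommRing R] (a b : R) (n : ℕ) :
    (a + 1) * (b + 1) * (a - b) ∣ (-1) ^ n * (a - b) + a ^ n * (b + 1) - b ^ n * (a + 1) := by
  set G : R → R := fun x => ∑ i ∈ range n, x ^ i * (-1) ^ (n - 1 - i)
  have hG (x : R) : x ^ n - (-1) ^ n = (x + 1) * G x := pow_sub_neg_one_pow_eq_add_one_mul x n
  have hN : (-1) ^ n * (a - b) + a ^ n * (b + 1) - b ^ n * (a + 1)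
      = (a + 1) * (b + 1) * (G a - G b) := by
    linear_combination (b + 1) * hG a - (a + 1) * hG b
  rw [hN]
  exact mul_dvd_mul_left _ (sub_dvd_sum_pow_mul_sub_sum_pow_mul a b _ n)

/-- The numerator `N_x(n) = (-1)^n (t0 - t1) + t0^n (t1 + 1) - t1^n (t0 + 1)` of the
skein coefficient `x(n)` is divisible by `(t0 + 1)(t1 + 1)(t0 - t1)` in `ℤ[t0, t1]`. -/
theorem dvd_Nx (n : ℕ) :
    (t0 + 1) * (t1 + 1) * (t0 - t1) ∣
      ((-1 : R2) ^ n * (t0 - t1) + t0 ^ n * (t1 + 1) - t1 ^ n * (t0 + 1)) :=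
  add_one_mul_add_one_mul_sub_dvd t0 t1 n
end
end

section
/- For every odd integer r ≥ 5, the polynomial N(r) := (t0 - t1)(t0 t1 + 1) - t0^{r-1}(t1 - 1)(t1 + 1) + t1^{r-1}(t0 - 1)(t0 + 1) is divisible by (t0 + 1)(t1 + 1)(t0 - t1) in Z[t0, t1], and the quotient polynomial has span equal to 2r - 6. -/
noncomputable section

open MvPolynomial Finset

/-! Write `n = r - 3` (even) and `S_m(x, y)` for the sum of all monomials of degree `< m` in
`x, y`. Then `N(r) = (t0 + 1)(t1 + 1)(t0 - t1) Q` with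
`Q = S_{n+1}(-t0, -t1) + t0 t1 S_n(-t0, -t1)`, which follows from
`(x - y) S_m(x, y) = x G_m(x) - y G_m(y)` and `(1 - x) G_m(x) = 1 - x^m` for the geometric sums `G_m`.
The coefficient of `t0^i t1^j` in `Q` is `±1` on the triangle `i + j ≤ n` plus (shifted by `t0 t1`)
on `i + j ≤ n + 1`, `i, j ≥ 1`: so `i - j` ranges over `[-n, n]`, both ends being attained by `t0^n`
and `t1^n`, and the span is `2n = 2r - 6`. -/

section CommRing

variable {R : Type*} [CommRing R]

def cumGeomSum₂ (x y : R) (m : ℕ) : R :=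
  ∑ k ∈ range m, ∑ i ∈ range (k + 1), x ^ i * y ^ (k - i)

lemma cumGeomSum₂_mul_sub (x y : R) (m : ℕ) :
    cumGeomSum₂ x y m * (x - y) = x * ∑ k ∈ range m, x ^ k - y * ∑ k ∈ range m, y ^ k := by
  rw [cumGeomSum₂, sum_mul, mul_sum, mul_sum, ← sum_sub_distrib]
  refine sum_congr rfl fun k _ => ?_
  simpa [pow_succ'] using geom_sum₂_mul x y (k + 1)

def pretzelQuotient (a b : R) (n : ℕ) : R :=
  cumGeomSum₂ (-a) (-b) (n + 1) + cumGeomSum₂ (-a) (-b) n * (a * b)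

lemma pretzel_numerator_eq (a b : R) {n : ℕ} (hn : Even n) :
    (a - b) * (a * b + 1) - a ^ (n + 2) * (b - 1) * (b + 1) + b ^ (n + 2) * (a - 1) * (a + 1)
      = (a + 1) * (b + 1) * (a - b) * pretzelQuotient a b n := by
  have hS₁ := cumGeomSum₂_mul_sub (-a) (-b) (n + 1)
  have hS₀ := cumGeomSum₂_mul_sub (-a) (-b) n
  have ha₁ := mul_neg_geom_sum (-a) (n + 1)
  have hb₁ := mul_neg_geom_sum (-b) (n + 1)
  have ha₀ := mul_neg_geom_sum (-a) n
  have hb₀ := mul_neg_geom_sum (-b) n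
  rw [hn.add_one.neg_pow] at ha₁ hb₁
  rw [hn.neg_pow] at ha₀ hb₀
  rw [pretzelQuotient]
  linear_combination ((a + 1) * (b + 1)) * hS₁ + (a * b * (a + 1) * (b + 1)) * hS₀
    + (-a * (b + 1)) * ha₁ + (b * (a + 1)) * hb₁
    + (-a ^ 2 * b * (b + 1)) * ha₀ + (a * b ^ 2 * (a + 1)) * hb₀

lemma Finsupp.single_zero_add_single_one_eq_iff {i j : ℕ} {p : Fin 2 →₀ ℕ} :
    single 0 i + single 1 j = p ↔ i = p 0 ∧ j = p 1 := by
  rw [Finsupp.ext_iff, Fin.forall_fin_two]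
  simp [eq_comm]

lemma neg_X_zero_pow_mul_neg_X_one_pow (i j : ℕ) :
    ((-X 0) ^ i * (-X 1) ^ j : MvPolynomial (Fin 2) R)
      = monomial (Finsupp.single 0 i + Finsupp.single 1 j) ((-1) ^ (i + j)) :=
  calc ((-X 0) ^ i * (-X 1) ^ j : MvPolynomial (Fin 2) R)
      = C ((-1) ^ (i + j)) * (X 0 ^ i * X 1 ^ j) := by
        simp only [map_pow, map_neg, map_one]; ring
    _ = _ := by
      rw [X_pow_eq_monomial, X_pow_eq_monomial, monomial_mul, C_mul_monomial, one_mul, mul_one]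

lemma coeff_cumGeomSum₂_neg_X (m : ℕ) (p : Fin 2 →₀ ℕ) :
    coeff p (cumGeomSum₂ (-X 0) (-X 1) m : MvPolynomial (Fin 2) R)
      = if p 0 + p 1 < m then (-1) ^ (p 0 + p 1) else 0 := by
  have hdeg (k : ℕ) :
      coeff p (∑ i ∈ range (k + 1), (-X 0) ^ i * (-X 1) ^ (k - i) : MvPolynomial (Fin 2) R)
        = if p 0 + p 1 = k then (-1) ^ k else 0 := by
    simp only [coeff_sum, neg_X_zero_pow_mul_neg_X_one_pow, coeff_monomial,
      Finsupp.single_zero_add_single_one_eq_iff]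
    rw [sum_congr rfl fun i _ => ite_and .., sum_ite_eq' (range (k + 1)) (p 0)]
    simp only [mem_range]
    split_ifs <;> first | rfl | omega | (congr 1; omega)
  simp only [cumGeomSum₂, coeff_sum, hdeg, sum_ite_eq, mem_range]

lemma coeff_mul_X_zero_mul_X_one (P : MvPolynomial (Fin 2) R) (p : Fin 2 →₀ ℕ) :
    coeff p (P * (X 0 * X 1)) = if 1 ≤ p 0 ∧ 1 ≤ p 1
      then coeff (p - (Finsupp.single 0 1 + Finsupp.single 1 1)) P else 0 := by
  rw [X, X, monomial_mul, one_mul, coeff_mul_monomial', mul_one]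
  congr 1
  rw [Finsupp.le_def, Fin.forall_fin_two]
  simp

lemma coeff_pretzelQuotient_eq_zero {n : ℕ} {p : Fin 2 →₀ ℕ}
    (hp : (n : ℤ) < |(p 0 : ℤ) - p 1|) :
    coeff p (pretzelQuotient (X 0) (X 1) n : MvPolynomial (Fin 2) R) = 0 := by
  rw [lt_abs] at hp
  rw [pretzelQuotient, coeff_add, coeff_cumGeomSum₂_neg_X, coeff_mul_X_zero_mul_X_one,
    coeff_cumGeomSum₂_neg_X]
  simp only [Finsupp.tsub_apply, Finsupp.add_apply, Finsupp.single_eq_same,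
    Finsupp.single_eq_of_ne Fin.zero_ne_one, Finsupp.single_eq_of_ne Fin.zero_ne_one.symm]
  rw [if_neg (by omega), ite_eq_right_iff.2 fun _ => if_neg (by omega), add_zero]

lemma coeff_pretzelQuotient_single (i : Fin 2) (n : ℕ) :
    coeff (Finsupp.single i n) (pretzelQuotient (X 0) (X 1) n : MvPolynomial (Fin 2) R)
      = (-1) ^ n := by
  rw [pretzelQuotient, coeff_add, coeff_cumGeomSum₂_neg_X, coeff_mul_X_zero_mul_X_one]
  fin_cases i <;> simp

end CommRing

lemma span_eq_of_mem_support {P : R2} {a b : Fin 2 →₀ ℕ} (ha : a ∈ P.support)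
    (hb : b ∈ P.support)
    (hP : ∀ p ∈ P.support, (b 0 : ℤ) - b 1 ≤ (p 0 : ℤ) - p 1 ∧ (p 0 : ℤ) - p 1 ≤ (a 0 : ℤ) - a 1) :
    span P = ((a 0 : ℤ) - a 1) - ((b 0 : ℤ) - b 1) := by
  rw [span, dif_pos ⟨a, ha⟩]
  congr 1
  · exact le_antisymm (sup'_le _ _ fun p hp => (hP p hp).2) (le_sup' (fun p => (p 0 : ℤ) - p 1) ha)
  · exact le_antisymm (inf'_le (fun p => (p 0 : ℤ) - p 1) hb) (le_inf' _ _ fun p hp => (hP p hp).1)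

lemma span_pretzelQuotient (n : ℕ) : span (pretzelQuotient (X 0) (X 1) n) = 2 * n := by
  have hsingle (i : Fin 2) : Finsupp.single i n ∈ (pretzelQuotient (X 0) (X 1) n : R2).support := by
    rw [mem_support_iff, coeff_pretzelQuotient_single]
    exact pow_ne_zero _ (neg_ne_zero.2 one_ne_zero)
  rw [span_eq_of_mem_support (hsingle 0) (hsingle 1)]
  · simp only [Finsupp.single_eq_same, Finsupp.single_eq_of_ne Fin.zero_ne_one,
      Finsupp.single_eq_of_ne Fin.zero_ne_one.symm]
    push_cast
    ring
  · intro p hp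
    have := not_lt.1 (mt coeff_pretzelQuotient_eq_zero (mem_support_iff.1 hp))
    rw [abs_le] at this
    simpa using this

/-- For odd `r ≥ 5`, the polynomial
`N(r) = (t0 - t1)(t0 t1 + 1) - t0^(r-1)(t1-1)(t1+1) + t1^(r-1)(t0-1)(t0+1)`
is divisible by `(t0+1)(t1+1)(t0-t1)`, and the quotient (the Links-Gould invariant of the
pretzel knot `K(2,-1,r)`) has span `2r - 6`. -/
theorem pretzel_2_neg1_r (r : ℕ) (hodd : Odd r) (hr : 5 ≤ r) :
    ∃ Q : R2,
      (t0 - t1) * (t0 * t1 + 1) - t0 ^ (r - 1) * (t1 - 1) * (t1 + 1)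
          + t1 ^ (r - 1) * (t0 - 1) * (t0 + 1)
        = (t0 + 1) * (t1 + 1) * (t0 - t1) * Q ∧
      span Q = 2 * (r : ℤ) - 6 := by
  obtain ⟨n, rfl⟩ : ∃ n, r = n + 3 := ⟨r - 3, by omega⟩
  have hn : Even n := (Nat.odd_add'.mp hodd).mp (by decide)
  refine ⟨pretzelQuotient t0 t1 n, pretzel_numerator_eq t0 t1 hn, ?_⟩
  rw [t0, t1, span_pretzelQuotient]
  push_cast
  ring
end
end
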